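/- Let K̃ be a finite set (interferers), M a finite set (users), x_m ∈ {0,1} for m ∈ M with Σ_m x_m ≤ 1, and I_{k̃} ∈ {0,1}. Define C = { y ∈ {0,1}^{M×K̃} : for all m, Σ_{k̃} y_{m,k̃} ≤ 1; for all m,k̃, y_{m,k̃} ≤ x_m; for all m,k̃, y_{m,k̃} ≤ I_{k̃} } and C' = { y ∈ {0,1}^{M×K̃} : for all m, Σ_{k̃} y_{m,k̃} ≤ x_m; for all k̃, Σ_m y_{m,k̃} ≤ I_{k̃} }. Then C = C'. -/
import Mathlib


/-- Lemma 1 of the paper: the binary feasible set `C` and the set `C'` obtained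
by replacing the pointwise constraints with valid aggregated constraints are
equal, given the single-assignment constraint `∑ m, x m ≤ 1`. -/
theorem feasible_sets_equal
    {M ι : Type*} [Fintype M] [Fintype ι]
    (x : M → ℝ) (I : ι → ℝ)
    (hx : ∀ m, x m = 0 ∨ x m = 1)
    (hI : ∀ k, I k = 0 ∨ I k = 1)
    (hsum : ∑ m, x m ≤ 1) :
    {y : M → ι → ℝ |
        (∀ m k, y m k = 0 ∨ y m k = 1) ∧
        (∀ m, ∑ k, y m k ≤ 1) ∧
        (∀ m k, y m k ≤ x m) ∧
        (∀ m k, y m k ≤ I k)}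
      =
    {y : M → ι → ℝ |
        (∀ m k, y m k = 0 ∨ y m k = 1) ∧
        (∀ m, ∑ k, y m k ≤ x m) ∧
        (∀ k, ∑ m, y m k ≤ I k)} := by
  ext y
  simp only [Set.mem_setOf_eq]
  constructor
  · rintro ⟨hbin, hrow, hxle, hIle⟩
    have hnn : ∀ m k, 0 ≤ y m k := by
      intro m k; rcases hbin m k with h | h <;> rw [h] <;> norm_num
    refine ⟨hbin, ?_, ?_⟩
    · intro m
      rcases hx m with h | h
      · have : ∀ k, y m k = 0 := fun k =>
          le_antisymm (by simpa [h] using hxle m k) (hnn m k)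
        simp [this, h]
      · rw [h]; exact hrow m
    · intro k
      rcases hI k with h | h
      · have : ∀ m, y m k = 0 := fun m =>
          le_antisymm (by simpa [h] using hIle m k) (hnn m k)
        simp [this, h]
      · rw [h]
        calc ∑ m, y m k ≤ ∑ m, x m :=
              Finset.sum_le_sum fun m _ => hxle m k
          _ ≤ 1 := hsum
  · rintro ⟨hbin, hrow, hcol⟩
    have hnn : ∀ m k, 0 ≤ y m k := by
      intro m k; rcases hbin m k with h | h <;> rw [h] <;> norm_num
    have hxm : ∀ m, x m ≤ 1 := by
      intro m; rcases hx m with h | h <;> rw [h] <;> norm_num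
    refine ⟨hbin, fun m => (hrow m).trans (hxm m), ?_, ?_⟩
    · intro m k
      calc y m k ≤ ∑ j, y m j :=
            Finset.single_le_sum (fun j _ => hnn m j) (Finset.mem_univ k)
        _ ≤ x m := hrow m
    · intro m k
      calc y m k ≤ ∑ n, y n k :=
            Finset.single_le_sum (fun n _ => hnn n k) (Finset.mem_univ m)
        _ ≤ I k := hcol k
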